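/- For every natural number n ≥ 1 and all reals 0 < q < p ≤ 1, one has p²q[n]_{p,q}/[n+1]_{p,q} ≤ 1 and sup_{x ≥ 0} | L_n^{p,q}( t/(1+t); x ) − x/(1+x) | ≤ 1 − p²q[n]_{p,q}/[n+1]_{p,q}. -/

import Mathlib

open Finset Filter
open scoped Classical

noncomputable section

/-- The `(p,q)`-integer `[n]_{p,q} = (p^n - q^n)/(p - q)`. -/
def pqInt (p q : ℝ) (n : ℕ) : ℝ := (p ^ n - q ^ n) / (p - q)

/-- The `(p,q)`-factorial. -/
def pqFact (p q : ℝ) : ℕ → ℝ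
  | 0 => 1
  | n + 1 => pqFact p q n * pqInt p q (n + 1)

/-- The `(p,q)`-binomial coefficient. -/
def pqBinom (p q : ℝ) (n k : ℕ) : ℝ :=
  pqFact p q n / (pqFact p q k * pqFact p q (n - k))

/-- `ℓ_n^{p,q}(x) = ∏_{s=0}^{n-1} (p^s + q^s x)`. -/
def pqEll (p q : ℝ) (n : ℕ) (x : ℝ) : ℝ :=
  ∏ s ∈ Finset.range n, (p ^ s + q ^ s * x)

/-- The node `p^{n-k+1}[k]_{p,q} / ([n-k+1]_{p,q} q^k)`. -/
def pqNode (p q : ℝ) (n k : ℕ) : ℝ :=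
  p ^ (n - k + 1) * pqInt p q k / (pqInt p q (n - k + 1) * q ^ k)

/-- The `(p,q)`-Bleimann–Butzer–Hahn operator. -/
def bbh (p q : ℝ) (n : ℕ) (f : ℝ → ℝ) (x : ℝ) : ℝ :=
  (p * q / pqEll p q n x) *
    ∑ k ∈ Finset.range (n + 1),
      f (pqNode p q n k) * p ^ ((n - k) * (n - k - 1) / 2) *
        q ^ (k * (k - 1) / 2) * pqBinom p q n k * x ^ k

/-- `δ_n(x)` from Theorem 3.1. -/
def pqDelta (p q : ℝ) (n : ℕ) (x : ℝ) : ℝ :=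
  (x / (1 + x)) ^ 2 *
      (p ^ 2 * q ^ 3 * pqInt p q n * pqInt p q (n - 1) / (pqInt p q (n + 1)) ^ 2 *
          ((1 + x) / (p + q * x)) -
        2 * p * q * pqInt p q n / pqInt p q (n + 1) + 1) +
    p ^ (n + 2) * q * pqInt p q n / (pqInt p q (n + 1)) ^ 2 * (x / (1 + x))

/-- Statistical convergence of a real sequence. -/
def StatConv (a : ℕ → ℝ) (l : ℝ) : Prop :=
  ∀ ε > (0 : ℝ), Tendsto (fun n : ℕ =>
    (((Finset.range (n + 1)).filter (fun k => ε ≤ |a k - l|)).card : ℝ) / n)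
    atTop (nhds 0)

/-- A modulus of continuity. -/
def IsModulus (ω : ℝ → ℝ) : Prop :=
  (∀ δ, 0 ≤ δ → 0 ≤ ω δ) ∧
  (∀ δ₁ δ₂, 0 ≤ δ₁ → δ₁ ≤ δ₂ → ω δ₁ ≤ ω δ₂) ∧
  (∀ δ₁ δ₂, 0 ≤ δ₁ → 0 ≤ δ₂ → ω (δ₁ + δ₂) ≤ ω δ₁ + ω δ₂) ∧
  Tendsto ω (nhdsWithin 0 (Set.Ioi 0)) (nhds 0)

/-- Membership in the class `H_ω`. -/
def MemHomega (ω f : ℝ → ℝ) : Prop :=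
  ∀ x y : ℝ, 0 ≤ x → 0 ≤ y → |f x - f y| ≤ ω |x / (1 + x) - y / (1 + y)|

/-- The modulus `ω̃(f; δ)`. -/
def omegaTilde (f : ℝ → ℝ) (δ : ℝ) : ℝ :=
  sSup {d | ∃ t x : ℝ, 0 ≤ t ∧ 0 ≤ x ∧ |t / (1 + t) - x / (1 + x)| ≤ δ ∧ d = |f t - f x|}

/-- The bivariate `(p,q)`-Bleimann–Butzer–Hahn operator. -/
def bbh2 (p₁ p₂ q₁ q₂ : ℝ) (n₁ n₂ : ℕ) (f : ℝ → ℝ → ℝ) (x y : ℝ) : ℝ :=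
  (p₁ * p₂ * q₁ * q₂ / (pqEll p₁ q₁ n₁ x * pqEll p₂ q₂ n₂ y)) *
    ∑ k₁ ∈ Finset.range (n₁ + 1), ∑ k₂ ∈ Finset.range (n₂ + 1),
      f (pqNode p₁ q₁ n₁ k₁) (pqNode p₂ q₂ n₂ k₂) *
        p₁ ^ ((n₁ - k₁) * (n₁ - k₁ - 1) / 2) * q₁ ^ (k₁ * (k₁ - 1) / 2) *
        p₂ ^ ((n₂ - k₂) * (n₂ - k₂ - 1) / 2) * q₂ ^ (k₂ * (k₂ - 1) / 2) *
        pqBinom p₁ q₁ n₁ k₁ * pqBinom p₂ q₂ n₂ k₂ * x ^ k₁ * y ^ k₂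

/-- Statistical convergence of a double real sequence (Pringsheim sense). -/
def StatConv2 (a : ℕ → ℕ → ℝ) (l : ℝ) : Prop :=
  ∀ ε > (0 : ℝ), Tendsto (fun N : ℕ × ℕ =>
    ((((Finset.range (N.1 + 1)) ×ˢ (Finset.range (N.2 + 1))).filter
        (fun jk => ε ≤ |a jk.1 jk.2 - l|)).card : ℝ) / (N.1 * N.2))
    atTop (nhds 0)

/-- A bivariate modulus of continuity. -/
def IsModulus2 (ω : ℝ → ℝ → ℝ) : Prop :=
  (∀ a b, 0 ≤ a → 0 ≤ b → 0 ≤ ω a b) ∧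
  (∀ a a' b, 0 ≤ a → a ≤ a' → 0 ≤ b → ω a b ≤ ω a' b) ∧
  (∀ a b b', 0 ≤ a → 0 ≤ b → b ≤ b' → ω a b ≤ ω a b') ∧
  (∀ a a' b, 0 ≤ a → 0 ≤ a' → 0 ≤ b → ω (a + a') b ≤ ω a b + ω a' b) ∧
  (∀ a b b', 0 ≤ a → 0 ≤ b → 0 ≤ b' → ω a (b + b') ≤ ω a b + ω a b') ∧
  Tendsto (fun d : ℝ × ℝ => ω d.1 d.2)
    (nhdsWithin (0, 0) (Set.Ioi 0 ×ˢ Set.Ioi 0)) (nhds 0)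

/-- Membership in the class `H_{ω₂}`. -/
def MemHomega2 (ω g : ℝ → ℝ → ℝ) : Prop :=
  ∀ u₁ v₁ u₂ v₂ : ℝ, 0 ≤ u₁ → 0 ≤ v₁ → 0 ≤ u₂ → 0 ≤ v₂ →
    |g u₁ v₁ - g u₂ v₂| ≤
      ω |u₁ / (1 + u₁) - u₂ / (1 + u₂)| |v₁ / (1 + v₁) - v₂ / (1 + v₂)|

/-- The bivariate modulus `ω̃(g; δ₁, δ₂)`. -/
def omegaTilde2 (g : ℝ → ℝ → ℝ) (δ₁ δ₂ : ℝ) : ℝ :=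
  sSup {d | ∃ t s x y : ℝ, 0 ≤ t ∧ 0 ≤ s ∧ 0 ≤ x ∧ 0 ≤ y ∧
    |t / (1 + t) - x / (1 + x)| ≤ δ₁ ∧ |s / (1 + s) - y / (1 + y)| ≤ δ₂ ∧
    d = |g t s - g x y|}

/-! On the nodes, `t / (1 + t)` takes the value `p^{n-k+1} [k] / [n+1]`. Absorbing `[k]` into the
`(p,q)`-binomial coefficient and applying the `(p,q)`-Gauss binomial formula of order `n - 1` turns
the operator sum into the product `∏_{s<n-1} (p^{s+1} + q^{s+1} x)`, which cancels against
`ℓ_n(x) = (1 + x) ∏_{s<n-1} (p^{s+1} + q^{s+1} x)`. Hence `L_n(t/(1+t); x) = α_n x / (1 + x)` exactly,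
with `α_n = p² q [n] / [n+1]`, and `[n+1] = p [n] + q^n` gives `α_n ≤ 1`. -/

theorem pqInt_zero (p q : ℝ) : pqInt p q 0 = 0 := by
  simp [pqInt]

theorem pqInt_one {p q : ℝ} (h : p ≠ q) : pqInt p q 1 = 1 := by
  simp [pqInt, sub_ne_zero.2 h]

theorem pqInt_add (p q : ℝ) (m k : ℕ) :
    pqInt p q (m + k) = p ^ k * pqInt p q m + q ^ m * pqInt p q k := by
  simp only [pqInt, mul_div_assoc', ← add_div]
  ring

theorem pqInt_succ {p q : ℝ} (h : p ≠ q) (n : ℕ) :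
    pqInt p q (n + 1) = p * pqInt p q n + q ^ n := by
  rw [pqInt_add, pqInt_one h, pow_one, mul_one]

theorem pqInt_nonneg {p q : ℝ} (hq : 0 ≤ q) (hqp : q ≤ p) (n : ℕ) : 0 ≤ pqInt p q n :=
  div_nonneg (sub_nonneg.2 (pow_le_pow_left₀ hq hqp n)) (sub_nonneg.2 hqp)

theorem pqFact_succ (p q : ℝ) (n : ℕ) :
    pqFact p q (n + 1) = pqFact p q n * pqInt p q (n + 1) :=
  rfl

def pqWeight (p q : ℝ) (n k : ℕ) : ℝ :=
  p ^ ((n - k) * (n - k - 1) / 2) * q ^ (k * (k - 1) / 2) * pqBinom p q n k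

section
variable {p q : ℝ} (hq : 0 ≤ q) (hqp : q < p)
include hq hqp

theorem pqInt_pos {n : ℕ} (hn : n ≠ 0) : 0 < pqInt p q n :=
  div_pos (sub_pos.2 (pow_lt_pow_left₀ hqp hq hn)) (sub_pos.2 hqp)

theorem pqFact_pos (n : ℕ) : 0 < pqFact p q n := by
  induction n with
  | zero => exact one_pos
  | succ n ih => exact mul_pos ih (pqInt_pos hq hqp n.succ_ne_zero)

theorem pqBinom_zero_right (n : ℕ) : pqBinom p q n 0 = 1 := by
  simp [pqBinom, pqFact, (pqFact_pos hq hqp n).ne']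

theorem pqBinom_self (n : ℕ) : pqBinom p q n n = 1 := by
  simp [pqBinom, pqFact, (pqFact_pos hq hqp n).ne']

theorem pqBinom_succ_succ {n j : ℕ} (hj : j < n) :
    pqBinom p q (n + 1) (j + 1)
      = p ^ (j + 1) * pqBinom p q n (j + 1) + q ^ (n - j) * pqBinom p q n j := by
  obtain ⟨b, rfl⟩ : ∃ b, n = j + 1 + b := ⟨n - (j + 1), by omega⟩
  have hsplit : pqInt p q (j + 1 + b + 1)
      = p ^ (j + 1) * pqInt p q (b + 1) + q ^ (b + 1) * pqInt p q (j + 1) := by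
    rw [show j + 1 + b + 1 = b + 1 + (j + 1) by ring, pqInt_add]
  simp only [pqBinom, show j + 1 + b + 1 - (j + 1) = b + 1 by omega,
    show j + 1 + b - (j + 1) = b by omega, show j + 1 + b - j = b + 1 by omega,
    pqFact_succ, hsplit]
  have := (pqFact_pos hq hqp j).ne'
  have := (pqFact_pos hq hqp b).ne'
  have := (pqInt_pos hq hqp j.succ_ne_zero).ne'
  have := (pqInt_pos hq hqp b.succ_ne_zero).ne'
  field_simp

theorem pqInt_mul_pqBinom_succ (m j : ℕ) :
    pqInt p q (j + 1) * pqBinom p q (m + 1) (j + 1) = pqInt p q (m + 1) * pqBinom p q m j := by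
  simp only [pqBinom, Nat.add_sub_add_right, pqFact_succ]
  have := (pqFact_pos hq hqp j).ne'
  have := (pqFact_pos hq hqp (m - j)).ne'
  have := (pqInt_pos hq hqp j.succ_ne_zero).ne'
  field_simp

theorem pqWeight_succ_zero (n : ℕ) : pqWeight p q (n + 1) 0 = p ^ n * pqWeight p q n 0 := by
  simp only [pqWeight, Nat.sub_zero, Nat.triangle_succ, pqBinom_zero_right hq hqp, pow_add]
  ring

theorem pqWeight_succ_self (n : ℕ) :
    pqWeight p q (n + 1) (n + 1) = q ^ n * pqWeight p q n n := by
  simp only [pqWeight, Nat.sub_self, Nat.triangle_succ, pqBinom_self hq hqp, pow_add]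
  ring

theorem pqWeight_succ_succ {n j : ℕ} (hj : j < n) :
    pqWeight p q (n + 1) (j + 1) = p ^ n * pqWeight p q n (j + 1) + q ^ n * pqWeight p q n j := by
  obtain ⟨b, rfl⟩ : ∃ b, n = j + 1 + b := ⟨n - (j + 1), by omega⟩
  simp only [pqWeight, pqBinom_succ_succ hq hqp hj, show j + 1 + b + 1 - (j + 1) = b + 1 by omega,
    show j + 1 + b - (j + 1) = b by omega, show j + 1 + b - j = b + 1 by omega,
    Nat.triangle_succ, pow_add]
  ring

theorem pqInt_mul_pqWeight_succ (m j : ℕ) :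
    pqInt p q (j + 1) * pqWeight p q (m + 1) (j + 1)
      = q ^ j * pqInt p q (m + 1) * pqWeight p q m j := by
  simp only [pqWeight, Nat.add_sub_add_right, Nat.triangle_succ, pow_add]
  linear_combination p ^ ((m - j) * (m - j - 1) / 2) * q ^ (j * (j - 1) / 2) * q ^ j *
    pqInt_mul_pqBinom_succ hq hqp m j

theorem sum_pqWeight_mul_pow_eq_prod (u v : ℝ) (n : ℕ) :
    ∑ k ∈ range (n + 1), pqWeight p q n k * u ^ (n - k) * v ^ k
      = ∏ s ∈ range n, (p ^ s * u + q ^ s * v) := by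
  induction n with
  | zero => simp [pqWeight, pqBinom_zero_right hq hqp]
  | succ n ih =>
    have hmid : ∑ j ∈ range n, pqWeight p q (n + 1) (j + 1) * u ^ (n + 1 - (j + 1)) * v ^ (j + 1)
        = ∑ j ∈ range n, pqWeight p q n (j + 1) * u ^ (n - (j + 1)) * v ^ (j + 1) * (p ^ n * u)
          + ∑ j ∈ range n, pqWeight p q n j * u ^ (n - j) * v ^ j * (q ^ n * v) := by
      rw [← sum_add_distrib]
      refine sum_congr rfl fun j hj => ?_
      have hj : j < n := mem_range.1 hj
      rw [pqWeight_succ_succ hq hqp hj, show n + 1 - (j + 1) = n - (j + 1) + 1 by omega,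
        show n - j = n - (j + 1) + 1 by omega]
      ring
    rw [prod_range_succ, ← ih, mul_add, sum_mul, sum_mul, sum_range_succ', sum_range_succ,
      sum_range_succ' (fun k => _ * (p ^ n * u)), sum_range_succ (fun k => _ * (q ^ n * v)),
      hmid, pqWeight_succ_zero hq hqp, pqWeight_succ_self hq hqp]
    simp only [Nat.sub_self, Nat.sub_zero]
    ring

end

theorem pqNode_div_one_add {p q : ℝ} (hq : 0 < q) (hqp : q < p) {n k : ℕ} (hk : k ≤ n) :
    pqNode p q n k / (1 + pqNode p q n k) = p ^ (n - k + 1) * pqInt p q k / pqInt p q (n + 1) := by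
  have hsplit :
      pqInt p q (n + 1) = p ^ (n - k + 1) * pqInt p q k + q ^ k * pqInt p q (n - k + 1) := by
    rw [← pqInt_add, show k + (n - k + 1) = n + 1 by omega]
  have := (pqInt_pos hq.le hqp (n - k).succ_ne_zero).ne'
  have := (pqInt_pos hq.le hqp n.succ_ne_zero).ne'
  have := (pow_pos hq k).ne'
  rw [pqNode, hsplit] at *
  field_simp
  ring

theorem bbh_eq_sum_pqWeight (p q : ℝ) (n : ℕ) (f : ℝ → ℝ) (x : ℝ) :
    bbh p q n f x = p * q / pqEll p q n x *
      ∑ k ∈ range (n + 1), f (pqNode p q n k) * pqWeight p q n k * x ^ k := by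
  simp only [bbh, pqWeight, mul_assoc]

theorem pqEll_succ (p q : ℝ) (m : ℕ) (x : ℝ) :
    pqEll p q (m + 1) x = (1 + x) * ∏ s ∈ range m, (p ^ s * p + q ^ s * (q * x)) := by
  rw [pqEll, prod_range_succ', mul_comm]
  simp only [pow_succ, pow_zero, one_mul, mul_assoc]

theorem bbh_div_one_add {p q : ℝ} (hq : 0 < q) (hqp : q < p) (n : ℕ) {x : ℝ} (hx : 0 ≤ x) :
    bbh p q n (fun t => t / (1 + t)) x
      = p ^ 2 * q * pqInt p q n / pqInt p q (n + 1) * (x / (1 + x)) := by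
  cases n with
  | zero => simp [bbh, pqNode, pqInt_zero]
  | succ m =>
    have hsum : ∑ k ∈ range (m + 1 + 1),
          pqNode p q (m + 1) k / (1 + pqNode p q (m + 1) k) * pqWeight p q (m + 1) k * x ^ k
        = p * pqInt p q (m + 1) * x / pqInt p q (m + 1 + 1)
          * ∏ s ∈ range m, (p ^ s * p + q ^ s * (q * x)) := by
      rw [sum_range_succ', ← sum_pqWeight_mul_pow_eq_prod hq.le hqp p (q * x) m, mul_sum,
        pqNode_div_one_add hq hqp (Nat.zero_le _), pqInt_zero, mul_zero, zero_div, zero_mul,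
        zero_mul, add_zero]
      refine sum_congr rfl fun j hj => ?_
      rw [pqNode_div_one_add hq hqp (by simpa using hj), Nat.add_sub_add_right]
      linear_combination p ^ (m - j + 1) * x ^ (j + 1) / pqInt p q (m + 1 + 1) *
        pqInt_mul_pqWeight_succ hq.le hqp m j
    have hInt : pqInt p q (m + 1 + 1) ≠ 0 := (pqInt_pos hq.le hqp (m + 1).succ_ne_zero).ne'
    have hprod : ∏ s ∈ range m, (p ^ s * p + q ^ s * (q * x)) ≠ 0 :=
      (prod_pos fun s _ => by have := hq.trans hqp; positivity).ne'
    have hx1 : 1 + x ≠ 0 := by positivity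
    rw [bbh_eq_sum_pqWeight, hsum, pqEll_succ]
    generalize ∏ s ∈ range m, (p ^ s * p + q ^ s * (q * x)) = P at hprod ⊢
    field_simp

theorem sq_mul_mul_pqInt_le_pqInt_succ {p q : ℝ} (hq : 0 ≤ q) (hqp : q < p) (hp : p ≤ 1)
    (n : ℕ) : p ^ 2 * q * pqInt p q n ≤ pqInt p q (n + 1) := by
  have hInt := pqInt_nonneg hq hqp.le n
  have hcoef : p ^ 2 * q ≤ p := by nlinarith
  rw [pqInt_succ hqp.ne']
  nlinarith [pow_nonneg hq n]

theorem bbh_first_moment_bound_general (n : ℕ) (p q : ℝ)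
    (hq : 0 < q) (hqp : q < p) (hp : p ≤ 1) :
    p ^ 2 * q * pqInt p q n / pqInt p q (n + 1) ≤ 1 ∧
      ∀ x : ℝ, 0 ≤ x →
        |bbh p q n (fun t => t / (1 + t)) x - x / (1 + x)| ≤
          1 - p ^ 2 * q * pqInt p q n / pqInt p q (n + 1) := by
  set α := p ^ 2 * q * pqInt p q n / pqInt p q (n + 1)
  have hα1 : α ≤ 1 :=
    div_le_one_of_le₀ (sq_mul_mul_pqInt_le_pqInt_succ hq.le hqp hp n)
      (pqInt_nonneg hq.le hqp.le _)
  refine ⟨hα1, fun x hx => ?_⟩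
  set r := x / (1 + x)
  have hr0 : 0 ≤ r := by positivity
  have hr1 : r ≤ 1 := div_le_one_of_le₀ (by linarith) (by positivity)
  have hbbh : bbh p q n (fun t => t / (1 + t)) x = α * r := bbh_div_one_add hq hqp n hx
  calc |bbh p q n (fun t => t / (1 + t)) x - r| = |(1 - α) * r| := by
        rw [hbbh, abs_sub_comm, one_sub_mul]
    _ = (1 - α) * r := abs_of_nonneg (mul_nonneg (sub_nonneg.2 hα1) hr0)
    _ ≤ 1 - α := mul_le_of_le_one_right (sub_nonneg.2 hα1) hr1

/-- a uniform bound for the first test function. -/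
theorem bbh_first_moment_bound (n : ℕ) (hn : 1 ≤ n) (p q : ℝ)
    (hq : 0 < q) (hqp : q < p) (hp : p ≤ 1) :
    p ^ 2 * q * pqInt p q n / pqInt p q (n + 1) ≤ 1 ∧
      ∀ x : ℝ, 0 ≤ x →
        |bbh p q n (fun t => t / (1 + t)) x - x / (1 + x)| ≤
          1 - p ^ 2 * q * pqInt p q n / pqInt p q (n + 1) :=
  bbh_first_moment_bound_general n p q hq hqp hp
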